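/- Let v be a run and 𝔹 a set of valid blocks of v. If v is conflict-serializable with respect to 𝔹, then v is liberally atomic with respect to 𝔹. The converse fails: there exist a run v and a set of valid blocks 𝔹 such that v is liberally atomic but not conflict-serializable with respect to 𝔹. -/

import Mathlib

/-!
Every Mazurkiewicz swap of independent symbols is also an event swap of block equivalence, so
`≡_M` is contained in `≡_𝔹` for every `𝔹`, and a serial witness of conflict serializability is
one of liberal atomicity.

For the converse, take the run `wy w₁ r₁ w₂ r₂ ry` with the blocks `w₁ r₁` and `w₂ r₂` on `x = 0`
and `wy ry` on `y = 1`. Swapping the two `x`-blocks as wholes and then moving `wy` and `ry` gives the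
serial run `w₂ r₂ wy ry w₁ r₁`. Mazurkiewicz equivalence, however, preserves the relative order
of dependent symbols, and the chain `wy → w₁ → w₂ → r₂ → ry` (same thread, two writes, write
then read, same thread) keeps three events between `wy` and `ry`.
-/

namespace TraceTheory

inductive Op : Type
  | rd : Op
  | wr : Op
deriving DecidableEq

structure Lbl (T X : Type) : Type where
  thread : T
  op : Op
  var : X
deriving DecidableEq

/-- A concurrent program run: a finite string over the concurrent alphabet. -/
abbrev Run (T X : Type) := List (Lbl T X)

/-- An event of a run: a symbol together with its occurrence number. -/
abbrev Event (T X : Type) := Lbl T X × ℕ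

variable {T X : Type} [DecidableEq T] [DecidableEq X]

/-- Dependence: same thread, or same variable with at least one write. -/
def Dep (a b : Lbl T X) : Prop :=
  a.thread = b.thread ∨ (a.var = b.var ∧ (a.op = Op.wr ∨ b.op = Op.wr))

/-- The event at position `i` of run `w`. -/
def evAt (w : Run T X) (i : Fin w.length) : Event T X :=
  (w.get i, (w.take (i : ℕ)).count (w.get i))

def HasEv (w : Run T X) (e : Event T X) : Prop := ∃ i : Fin w.length, evAt w i = e

/-- `e` occurs (strictly) before `f` in `w`. -/
def EvBefore (w : Run T X) (e f : Event T X) : Prop :=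
  ∃ i j : Fin w.length, (i : ℕ) < (j : ℕ) ∧ evAt w i = e ∧ evAt w j = f

/-- Program order. -/
def po (w : Run T X) (e f : Event T X) : Prop :=
  e.1.thread = f.1.thread ∧ EvBefore w e f

/-- Reads-from: `f` is a read that observes the write `e` (the last write on
the same variable before `f`). -/
def rf (w : Run T X) (e f : Event T X) : Prop :=
  e.1.op = Op.wr ∧ f.1.op = Op.rd ∧ e.1.var = f.1.var ∧
  ∃ i j : Fin w.length, evAt w i = e ∧ evAt w j = f ∧ (i : ℕ) < (j : ℕ) ∧
    ∀ k : Fin w.length, (i : ℕ) < (k : ℕ) → (k : ℕ) < (j : ℕ) →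
      ¬ ((w.get k).op = Op.wr ∧ (w.get k).var = f.1.var)

/-- Every read is preceded by a write on the same variable. -/
def WellFormed (w : Run T X) : Prop :=
  ∀ j : Fin w.length, (w.get j).op = Op.rd →
    ∃ i : Fin w.length, (i : ℕ) < (j : ℕ) ∧ (w.get i).op = Op.wr ∧
      (w.get i).var = (w.get j).var

/-- Reads-from equivalence. -/
def RfEquiv (w w' : Run T X) : Prop :=
  w.Perm w' ∧ po w = po w' ∧ rf w = rf w'

/-- A single Mazurkiewicz swap of two adjacent independent symbols. -/
inductive MazSwap : Run T X → Run T X → Prop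
  | swap (u v : Run T X) (a b : Lbl T X) (h : ¬ Dep a b) :
      MazSwap (u ++ a :: b :: v) (u ++ b :: a :: v)

/-- Trace (Mazurkiewicz) equivalence: the smallest equivalence closed under swaps. -/
def MazEquiv (w w' : Run T X) : Prop := Relation.EqvGen MazSwap w w'

/-- The trace (happens-before) partial order of a run. -/
def MazOrder (w : Run T X) : Event T X → Event T X → Prop :=
  Relation.TransGen (fun e f => EvBefore w e f ∧ Dep e.1 f.1)

/-- `B` is a block word (one write followed by reads of the same variable) that is
valid as a contiguous segment whose suffix (remainder of the run) is `s`: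
no read after the block reads from the block's write. -/
def ValidBlockSeg (B s : Run T X) : Prop :=
  ∃ a rest, B = a :: rest ∧ a.op = Op.wr ∧
    (∀ b ∈ rest, b.op = Op.rd ∧ b.var = a.var) ∧
    ∀ j : Fin s.length, (s.get j).op = Op.rd → (s.get j).var = a.var →
      ∃ m : Fin s.length, (m : ℕ) < (j : ℕ) ∧ (s.get m).op = Op.wr ∧
        (s.get m).var = a.var

def ThreadsDisjoint (B B' : Run T X) : Prop :=
  ∀ a ∈ B, ∀ b ∈ B', a.thread ≠ b.thread

/-- A single block-equivalence step (clause (i): block swap, clause (ii): event swap). -/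
inductive BlkSwap : Run T X → Run T X → Prop
  | block (p B B' s : Run T X) (hB : ValidBlockSeg B (B' ++ s)) (hB' : ValidBlockSeg B' s)
      (hd : ThreadsDisjoint B B') :
      BlkSwap (p ++ B ++ B' ++ s) (p ++ B' ++ B ++ s)
  | single (p s : Run T X) (a b : Lbl T X) (ht : a.thread ≠ b.thread)
      (h : a.var ≠ b.var ∨ (a.op = Op.rd ∧ b.op = Op.rd)) :
      BlkSwap (p ++ a :: b :: s) (p ++ b :: a :: s)

/-- Block equivalence: smallest reflexive transitive relation closed under the swaps. -/
def BlkEquiv : Run T X → Run T X → Prop := Relation.ReflTransGen BlkSwap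

/-- The set of events of the segment `B` of a run, given the prefix `p` preceding it. -/
def segEvents (p B : Run T X) : Set (Event T X) :=
  { e | ∃ i : Fin B.length, e = (B.get i, ((p ++ B.take (i : ℕ)).count (B.get i))) }

/-- Block-equivalence steps where block swaps are restricted to blocks from `𝔹`. -/
inductive BlkSwapIn (𝔹 : Set (Set (Event T X))) : Run T X → Run T X → Prop
  | block (p B B' s : Run T X) (hB : ValidBlockSeg B (B' ++ s)) (hB' : ValidBlockSeg B' s)
      (hBmem : segEvents p B ∈ 𝔹) (hB'mem : segEvents (p ++ B) B' ∈ 𝔹)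
      (hd : ThreadsDisjoint B B') :
      BlkSwapIn 𝔹 (p ++ B ++ B' ++ s) (p ++ B' ++ B ++ s)
  | single (p s : Run T X) (a b : Lbl T X) (ht : a.thread ≠ b.thread)
      (h : a.var ≠ b.var ∨ (a.op = Op.rd ∧ b.op = Op.rd)) :
      BlkSwapIn 𝔹 (p ++ a :: b :: s) (p ++ b :: a :: s)

/-- Block equivalence restricted to the set of blocks `𝔹`. -/
def BlkEquivIn (𝔹 : Set (Set (Event T X))) : Run T X → Run T X → Prop :=
  Relation.ReflTransGen (BlkSwapIn 𝔹)

/-- A valid block of `w` (as a set of events): a write event together with exactly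
the reads of `w` that read from it. -/
def IsValidBlockOf (w : Run T X) (S : Set (Event T X)) : Prop :=
  ∃ e : Event T X, HasEv w e ∧ e.1.op = Op.wr ∧ S = insert e { f | rf w e f }

def ValidBlocks (w : Run T X) (𝔹 : Set (Set (Event T X))) : Prop :=
  ∀ S ∈ 𝔹, IsValidBlockOf w S

/-- Block `S` occurs as a contiguous subword of `u`. -/
def SerialIn (u : Run T X) (S : Set (Event T X)) : Prop :=
  ∃ p B s, u = p ++ B ++ s ∧ segEvents p B = S

/-- Liberal atomicity of a run `v` with respect to a set of blocks `𝔹`. -/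
def LiberallyAtomic (v : Run T X) (𝔹 : Set (Set (Event T X))) : Prop :=
  ∃ u, BlkEquivIn 𝔹 u v ∧ ∀ S ∈ 𝔹, SerialIn u S

/-- Conflict serializability of a run `v` with respect to a set of blocks `𝔹`. -/
def ConflictSerializable (v : Run T X) (𝔹 : Set (Set (Event T X))) : Prop :=
  ∃ u, MazEquiv u v ∧ ∀ S ∈ 𝔹, SerialIn u S

/-- The block-happens-before order `≺_𝔹`. -/
def Bhb (w : Run T X) (𝔹 : Set (Set (Event T X))) : Event T X → Event T X → Prop :=
  Relation.TransGen (fun e f =>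
    EvBefore w e f ∧ Dep e.1 f.1 ∧
    ¬ (e.1.thread ≠ f.1.thread ∧ ∃ B ∈ 𝔹, ∃ B' ∈ 𝔹, B ≠ B' ∧ e ∈ B ∧ f ∈ B'))

/-- The saturated order `⪻_𝔹` on events (`Sum.inl`) and blocks (`Sum.inr`). -/
inductive Sat (w : Run T X) (𝔹 : Set (Set (Event T X))) :
    (Event T X ⊕ Set (Event T X)) → (Event T X ⊕ Set (Event T X)) → Prop
  | base {e f : Event T X} : Bhb w 𝔹 e f → Sat w 𝔹 (Sum.inl e) (Sum.inl f)
  | toBlk {e f : Event T X} {B B' : Set (Event T X)} :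
      e.1.var = f.1.var → B ∈ 𝔹 → B' ∈ 𝔹 → e ∈ B → f ∈ B' → B ≠ B' →
      Sat w 𝔹 (Sum.inl e) (Sum.inl f) → Sat w 𝔹 (Sum.inr B) (Sum.inr B')
  | ofBlk {B B' : Set (Event T X)} {e f : Event T X} :
      Sat w 𝔹 (Sum.inr B) (Sum.inr B') → e ∈ B → f ∈ B' →
      Sat w 𝔹 (Sum.inl e) (Sum.inl f)

/-- The event part of the saturated order `⪻_𝔹`. -/
def SatEv (w : Run T X) (𝔹 : Set (Set (Event T X))) (e f : Event T X) : Prop :=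
  Sat w 𝔹 (Sum.inl e) (Sum.inl f)

def SameVarBlocks (B B' : Set (Event T X)) : Prop :=
  ∃ x : X, (∀ e ∈ B, e.1.var = x) ∧ (∀ e ∈ B', e.1.var = x)

/-- No two distinct blocks of `𝔹` on the same variable overlap in `v`. -/
def NoOverlap (v : Run T X) (𝔹 : Set (Set (Event T X))) : Prop :=
  ∀ B ∈ 𝔹, ∀ B' ∈ 𝔹, B ≠ B' → SameVarBlocks B B' →
    (∀ e ∈ B, ∀ f ∈ B', EvBefore v e f) ∨ (∀ e ∈ B, ∀ f ∈ B', EvBefore v f e)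

/-- `v` is a proper linearization (of the events of `w`) of the order `ord`. -/
def ProperLin (w : Run T X) (𝔹 : Set (Set (Event T X)))
    (ord : Event T X → Event T X → Prop) (v : Run T X) : Prop :=
  w.Perm v ∧ (∀ e f, ord e f → EvBefore v e f) ∧ NoOverlap v 𝔹


/-- `e` is causally ordered before `f` under reads-from equivalence:
`e` occurs before `f` in every reads-from equivalent run. -/
def CausOrd (w : Run T X) (e f : Event T X) : Prop :=
  ∀ w', RfEquiv w w' → EvBefore w' e f

/-- `e` and `f` are causally concurrent under reads-from equivalence. -/
def CausConc (w : Run T X) (e f : Event T X) : Prop :=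
  ¬ CausOrd w e f ∧ ¬ CausOrd w f e


end TraceTheory

open scoped List

namespace List

variable {α : Type*} {l : List α} {a b : α}

theorem Nodup.idxOf_lt_idxOf_of_pair_sublist [DecidableEq α] (hl : l.Nodup) (h : [a, b] <+ l) :
    l.idxOf a < l.idxOf b := by
  induction l with
  | nil => simp at h
  | cons c l ih =>
    obtain ⟨hc, hl⟩ := nodup_cons.1 hl
    rcases sublist_cons_iff.1 h with h | ⟨r, hr, h⟩
    · have hca : c ≠ a := fun hca => hc (hca ▸ h.subset (by simp))
      have hcb : c ≠ b := fun hcb => hc (hcb ▸ h.subset (by simp))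
      simpa [idxOf_cons_ne _ hca, idxOf_cons_ne _ hcb] using ih hl h
    · obtain ⟨rfl, rfl⟩ := cons_eq_cons.1 hr
      have hab : a ≠ b := fun hab => hc (hab ▸ h.subset (by simp))
      simp [idxOf_cons_ne _ hab]

theorem Nodup.idxOf_succ_of_pair_infix [DecidableEq α] (hl : l.Nodup) (h : [a, b] <:+: l) :
    l.idxOf b = l.idxOf a + 1 := by
  obtain ⟨p, s, rfl⟩ := h
  grind [idxOf_append_of_notMem, nodup_append]

theorem Nodup.eq_pair_or_eq_pair (hl : l.Nodup) (hab : a ≠ b)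
    (h : ∀ c, c ∈ l ↔ c = a ∨ c = b) : l = [a, b] ∨ l = [b, a] := by
  have hperm : l.Perm [a, b] := (perm_ext_iff_of_nodup hl (by simp [hab])).2 (by simpa using h)
  match l, hperm.length_eq with
  | [c, d], _ => grind

end List

namespace TraceTheory

variable {T X : Type}

theorem Dep.symm {a b : Lbl T X} (h : Dep a b) : Dep b a := by
  unfold Dep at *; tauto

theorem Dep.refl (a : Lbl T X) : Dep a a := Or.inl rfl

theorem not_dep_iff {a b : Lbl T X} :
    ¬ Dep a b ↔ a.thread ≠ b.thread ∧ (a.var ≠ b.var ∨ (a.op = Op.rd ∧ b.op = Op.rd)) := by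
  unfold Dep
  cases a.op <;> cases b.op <;> simp

theorem MazSwap.symm {u v : Run T X} (h : MazSwap u v) : MazSwap v u := by
  obtain ⟨p, s, a, b, hab⟩ := h
  exact .swap p s b a (mt Dep.symm hab)

instance : Std.Symm (MazSwap (T := T) (X := X)) := ⟨fun _ _ => MazSwap.symm⟩

theorem MazEquiv.perm {u v : Run T X} (h : MazEquiv u v) : u.Perm v := by
  induction h with
  | rel _ _ h => obtain ⟨p, s, a, b, _⟩ := h; exact .append_left p (.swap b a s)
  | refl => exact .refl _
  | symm _ _ _ ih => exact ih.symm
  | trans _ _ _ _ _ ih₁ ih₂ => exact ih₁.trans ih₂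

theorem MazEquiv.filter_eq {p : Lbl T X → Bool} (hp : ∀ a b, p a → p b → Dep a b)
    {u v : Run T X} (h : MazEquiv u v) : u.filter p = v.filter p := by
  induction h with
  | rel _ _ h =>
    obtain ⟨pre, s, a, b, hab⟩ := h
    have : ¬ (p a ∧ p b) := fun h => hab (hp a b h.1 h.2)
    cases ha : p a <;> cases hb : p b <;> simp_all
  | refl => rfl
  | symm _ _ _ ih => exact ih.symm
  | trans _ _ _ _ _ ih₁ ih₂ => exact ih₁.trans ih₂

section DecidableEq

variable [DecidableEq T] [DecidableEq X]

instance : DecidableRel (Dep (T := T) (X := X)) := fun _ _ => by unfold Dep; infer_instance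

instance (w : Run T X) : DecidableRel (rf w) := fun _ _ => by unfold rf; infer_instance

theorem MazSwap.blkSwapIn (𝔹 : Set (Set (Event T X))) {u v : Run T X} (h : MazSwap u v) :
    BlkSwapIn 𝔹 u v := by
  obtain ⟨p, s, a, b, hab⟩ := h
  exact .single p s a b (not_dep_iff.1 hab).1 (not_dep_iff.1 hab).2

theorem MazEquiv.blkEquivIn (𝔹 : Set (Set (Event T X))) {u v : Run T X} (h : MazEquiv u v) :
    BlkEquivIn 𝔹 u v := by
  rw [MazEquiv, Relation.EqvGen.eqvGen_eq_reflTransGen] at h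
  exact Relation.ReflTransGen.mono (fun _ _ => MazSwap.blkSwapIn 𝔹) _ _ h

theorem MazEquiv.pair_sublist_iff {u v : Run T X} (h : MazEquiv u v) {a b : Lbl T X}
    (hab : Dep a b) : [a, b] <+ u ↔ [a, b] <+ v := by
  have key : ∀ w : Run T X, [a, b] <+ w ↔ [a, b] <+ w.filter (· ∈ [a, b]) := fun w =>
    ⟨fun h => by simpa using h.filter (· ∈ [a, b]), fun h => h.trans List.filter_sublist⟩
  rw [key u, key v, h.filter_eq]
  simp only [List.mem_cons, List.not_mem_nil, or_false, decide_eq_true_eq]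
  rintro c d (rfl | rfl) (rfl | rfl)
  exacts [.refl _, hab, hab.symm, .refl _]

theorem ConflictSerializable.liberallyAtomic {v : Run T X} {𝔹 : Set (Set (Event T X))}
    (h : ConflictSerializable v 𝔹) : LiberallyAtomic v 𝔹 :=
  let ⟨u, hu, hserial⟩ := h
  ⟨u, hu.blkEquivIn 𝔹, hserial⟩

theorem fst_mem_of_mem_segEvents {p B : Run T X} {e : Event T X} (he : e ∈ segEvents p B) :
    e.1 ∈ B := by
  obtain ⟨i, rfl⟩ := he
  exact List.get_mem B i

theorem exists_mem_segEvents {p B : Run T X} {l : Lbl T X} (hl : l ∈ B) :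
    ∃ n, (l, n) ∈ segEvents p B := by
  obtain ⟨i, rfl⟩ := List.mem_iff_get.1 hl
  exact ⟨_, i, rfl⟩

theorem segEvents_pair (p : Run T X) (a b : Lbl T X) :
    segEvents p [a, b] = {(a, p.count a), (b, (p ++ [a]).count b)} := by
  ext e
  simp only [segEvents, Set.mem_ofPred_eq, Set.mem_insert_iff, Set.mem_singleton_iff]
  constructor
  · rintro ⟨i, rfl⟩
    fin_cases i <;> simp
  · rintro (rfl | rfl)
    exacts [⟨0, by simp⟩, ⟨1, by simp⟩]

theorem SerialIn.pair_infix {u : Run T X} {a b : Lbl T X} {m n : ℕ}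
    (h : SerialIn u {(a, m), (b, n)}) (hu : u.Nodup) (hab : a ≠ b) :
    [a, b] <:+: u ∨ [b, a] <:+: u := by
  obtain ⟨p, B, s, rfl, hB⟩ := h
  have hlabels : ∀ c, c ∈ B ↔ c = a ∨ c = b := by
    intro c
    constructor
    · intro hc
      obtain ⟨k, hk⟩ := exists_mem_segEvents (p := p) hc
      rw [hB] at hk
      simp only [Set.mem_insert_iff, Set.mem_singleton_iff, Prod.mk.injEq] at hk
      tauto
    · have ha : (a, m) ∈ segEvents p B := hB ▸ Set.mem_insert _ _
      have hb : (b, n) ∈ segEvents p B := hB ▸ Set.mem_insert_of_mem _ rfl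
      rintro (rfl | rfl)
      exacts [fst_mem_of_mem_segEvents ha, fst_mem_of_mem_segEvents hb]
  have hBnd : B.Nodup := (List.infix_append p B s).sublist.nodup hu
  rcases hBnd.eq_pair_or_eq_pair hab hlabels with rfl | rfl
  exacts [.inl (List.infix_append p _ s), .inr (List.infix_append p _ s)]

theorem isValidBlockOf_pair {w : Run T X} {i j : Fin w.length} (hw : (w.get i).op = Op.wr)
    (hrf : ∀ k, rf w (evAt w i) (evAt w k) ↔ k = j) : IsValidBlockOf w {evAt w i, evAt w j} := by
  refine ⟨evAt w i, ⟨i, rfl⟩, hw, congrArg _ (Set.ext fun f => ?_)⟩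
  constructor
  · rintro rfl
    exact (hrf j).2 rfl
  · intro hf
    obtain ⟨k, rfl⟩ : ∃ k, evAt w k = f := by
      obtain ⟨-, -, -, -, k, -, hk, -⟩ := hf
      exact ⟨k, hk⟩
    rw [(hrf k).1 hf]
    rfl

end DecidableEq

namespace Counterexample

def w₁ : Lbl (Fin 5) (Fin 5) := ⟨0, .wr, 0⟩
def r₁ : Lbl (Fin 5) (Fin 5) := ⟨2, .rd, 0⟩
def w₂ : Lbl (Fin 5) (Fin 5) := ⟨1, .wr, 0⟩
def r₂ : Lbl (Fin 5) (Fin 5) := ⟨3, .rd, 0⟩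
def wy : Lbl (Fin 5) (Fin 5) := ⟨0, .wr, 1⟩
def ry : Lbl (Fin 5) (Fin 5) := ⟨3, .rd, 1⟩

def run : Run (Fin 5) (Fin 5) := [wy, w₁, r₁, w₂, r₂, ry]

def blk₁ : Set (Event (Fin 5) (Fin 5)) := {(w₁, 0), (r₁, 0)}
def blk₂ : Set (Event (Fin 5) (Fin 5)) := {(w₂, 0), (r₂, 0)}
def blkY : Set (Event (Fin 5) (Fin 5)) := {(wy, 0), (ry, 0)}

def blocks : Set (Set (Event (Fin 5) (Fin 5))) := {blk₁, blk₂, blkY}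

theorem validBlocks : ValidBlocks run blocks := by
  rintro S (rfl | rfl | rfl)
  · exact isValidBlockOf_pair (w := run) (i := ⟨1, by decide⟩) (j := ⟨2, by decide⟩)
      rfl (by decide)
  · exact isValidBlockOf_pair (w := run) (i := ⟨3, by decide⟩) (j := ⟨4, by decide⟩)
      rfl (by decide)
  · exact isValidBlockOf_pair (w := run) (i := ⟨0, by decide⟩) (j := ⟨5, by decide⟩)
      rfl (by decide)

theorem liberallyAtomic : LiberallyAtomic run blocks := by
  have swap (p s : Run (Fin 5) (Fin 5)) (a b : Lbl (Fin 5) (Fin 5)) (h : ¬ Dep a b) :=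
    (MazSwap.swap p s a b h).blkSwapIn blocks
  refine ⟨[w₂, r₂, wy, ry, w₁, r₁], ?_, ?_⟩
  · refine .head (swap [w₂, r₂, wy] [r₁] ry w₁ (by decide)) <|
      .head (swap [w₂, r₂, wy, w₁] [] ry r₁ (by decide)) <|
      .head (swap [w₂] [w₁, r₁, ry] r₂ wy (by decide)) <|
      .head (swap [] [r₂, w₁, r₁, ry] w₂ wy (by decide)) <| .single ?_
    exact .block [wy] [w₂, r₂] [w₁, r₁] [ry] ⟨w₂, [r₂], rfl, rfl, by decide, by decide⟩
      ⟨w₁, [r₁], rfl, rfl, by decide, by decide⟩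
      (by rw [segEvents_pair]; exact Set.mem_insert_of_mem _ (Set.mem_insert _ _))
      (by rw [segEvents_pair]; exact Set.mem_insert _ _)
      (by unfold ThreadsDisjoint; decide)
  · rintro S (rfl | rfl | rfl)
    · exact ⟨[w₂, r₂, wy, ry], [w₁, r₁], [], rfl, segEvents_pair _ _ _⟩
    · exact ⟨[], [w₂, r₂], [wy, ry, w₁, r₁], rfl, segEvents_pair _ _ _⟩
    · exact ⟨[w₂, r₂], [wy, ry], [w₁, r₁], rfl, segEvents_pair _ _ _⟩

theorem not_conflictSerializable : ¬ ConflictSerializable run blocks := by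
  rintro ⟨u, hu, hserial⟩
  have hnd : u.Nodup := hu.perm.nodup_iff.2 (by decide)
  have before (a b : Lbl (Fin 5) (Fin 5)) (hab : Dep a b) (h : [a, b] <+ run) :
      u.idxOf a < u.idxOf b :=
    hnd.idxOf_lt_idxOf_of_pair_sublist ((hu.pair_sublist_iff hab).2 h)
  have h₁ := before wy w₁ (by decide) (by decide)
  have h₂ := before w₁ w₂ (by decide) (by decide)
  have h₃ := before w₂ r₂ (by decide) (by decide)
  have h₄ := before r₂ ry (by decide) (by decide)
  rcases (hserial blkY (by simp [blocks])).pair_infix hnd (by decide) with h | h <;>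
    have := hnd.idxOf_succ_of_pair_infix h <;> omega

end Counterexample

/-- conflict serializability implies liberal atomicity, and the
converse fails (witnessed over an alphabet of 5 threads and 5 variables). -/
theorem conflict_serializable_implies_liberally_atomic_not_conversely :
    (∀ (T X : Type) [DecidableEq T] [DecidableEq X]
       (v : Run T X) (𝔹 : Set (Set (Event T X))),
       ValidBlocks v 𝔹 → ConflictSerializable v 𝔹 → LiberallyAtomic v 𝔹) ∧
    (∃ (v : Run (Fin 5) (Fin 5)) (𝔹 : Set (Set (Event (Fin 5) (Fin 5)))),
       ValidBlocks v 𝔹 ∧ LiberallyAtomic v 𝔹 ∧ ¬ ConflictSerializable v 𝔹) :=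
  ⟨fun _ _ _ _ _ _ _ h => h.liberallyAtomic,
    ⟨Counterexample.run, Counterexample.blocks, Counterexample.validBlocks,
      Counterexample.liberallyAtomic, Counterexample.not_conflictSerializable⟩⟩

end TraceTheory
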